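/- arXiv:1904.02753 — 2 statements merged into one kernel-verified Lean document; each statement's English description precedes it below -/
import Mathlib

section
/- The operators E_{i,j} = Σ_{c=1}^{k} x_{i,c} ∂_{j,c} and F_{a,b} = Σ_{p=1}^{m+n} x_{p,a} ∂_{p,b} on the bosonic-fermionic space V commute: E_{i,j} ∘ F_{a,b} = F_{a,b} ∘ E_{i,j} in End_ℂ(V) for all i,j ∈ {1,…,m+n} and all a,b ∈ {1,…,k}. -/
noncomputable section
open scoped TensorProduct
open scoped Classical

/-- The bosonic-fermionic space `V`: polynomials in the even variables `x_{i,a}` (`i < m`)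
tensored with the exterior algebra on the odd generators `ξ_{j,a}`. -/
abbrev BF (m n k : ℕ) : Type :=
  MvPolynomial (Fin m × Fin k) ℂ ⊗[ℂ] ExteriorAlgebra ℂ ((Fin n × Fin k) → ℂ)

/-- The operator `x_{i,a}`: multiplication by the variable `x_{i,a}` (bosonic case `i < m`),
resp. left exterior multiplication by `ξ_{i,a}` (fermionic case `m ≤ i`). -/
def xOp (m n k : ℕ) (i : Fin (m + n)) (a : Fin k) : Module.End ℂ (BF m n k) :=
  if h : (i : ℕ) < m then
    TensorProduct.map (LinearMap.mulLeft ℂ (MvPolynomial.X (⟨(i : ℕ), h⟩, a))) LinearMap.id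
  else
    TensorProduct.map LinearMap.id
      (LinearMap.mulLeft ℂ (ExteriorAlgebra.ι ℂ
        (Pi.single (⟨(i : ℕ) - m, by have := i.isLt; omega⟩, a) (1 : ℂ))))

/-- The operator `∂_{i,a}`: partial derivative in `x_{i,a}` (bosonic case), resp. the
contraction (interior product) with the coordinate functional of `ξ_{i,a}` (fermionic case). -/
def dOp (m n k : ℕ) (i : Fin (m + n)) (a : Fin k) : Module.End ℂ (BF m n k) :=
  if h : (i : ℕ) < m then
    TensorProduct.map ((MvPolynomial.pderiv (⟨(i : ℕ), h⟩, a)).toLinearMap) LinearMap.id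
  else
    TensorProduct.map LinearMap.id
      (CliffordAlgebra.contractLeft (Q := (0 : QuadraticForm ℂ ((Fin n × Fin k) → ℂ)))
        (LinearMap.proj (⟨(i : ℕ) - m, by have := i.isLt; omega⟩, a)))

/-! On `V = ℂ[x] ⊗ Λ(ξ)` the bosonic operators act on the first factor and the fermionic ones on
the second, so operators of different parity commute, while on each factor one has the canonical
(anti)commutation relations. Altogether `x_{i,c} x_{p,a} = ± x_{p,a} x_{i,c}`,
`∂_{j,c} ∂_{q,b} = ± ∂_{q,b} ∂_{j,c}` and `∂_{j,c} x_{p,a} = ± x_{p,a} ∂_{j,c} + δ_{pj} δ_{ac}`,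
the sign being `-1` exactly when both indices are fermionic. Since `x_{p,a} ∂_{p,b}` is even,
the signs cancel in
`[x_{i,c} ∂_{j,c}, x_{p,a} ∂_{p,b}] = δ_{pj} δ_{ac} x_{i,c} ∂_{p,b} - δ_{ip} δ_{cb} x_{p,a} ∂_{j,c}`,
and after summing over `c` and `p` both terms on the right become `x_{i,a} ∂_{j,b}`. -/

open MvPolynomial

namespace MvPolynomial

variable {R σ : Type*} [CommSemiring R]

theorem pderiv_pderiv_comm (s t : σ) (p : MvPolynomial σ R) :
    pderiv s (pderiv t p) = pderiv t (pderiv s p) := by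
  induction p using MvPolynomial.induction_on with
  | C => simp
  | add p q hp hq => simp [hp, hq]
  | mul_X p u hp =>
    simp only [pderiv_mul, pderiv_X, map_add, hp, Pi.single_apply, apply_ite (pderiv _),
      Derivation.map_one_eq_zero, map_zero, ite_self, mul_zero, add_zero]
    ring

theorem commute_pderiv (s t : σ) :
    Commute (pderiv s : Derivation R (MvPolynomial σ R) _).toLinearMap (pderiv t).toLinearMap :=
  LinearMap.ext fun p => pderiv_pderiv_comm s t p

theorem pderiv_mul_lmul_X [DecidableEq σ] (s t : σ) :
    (pderiv s).toLinearMap * Algebra.lmul R _ (X t : MvPolynomial σ R) =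
      Algebra.lmul R _ (X t) * (pderiv s).toLinearMap + (if t = s then 1 else 0 : R) • 1 := by
  refine LinearMap.ext fun p => ?_
  by_cases hts : t = s <;> simp [hts, add_comm, mul_comm]

end MvPolynomial

namespace CliffordAlgebra

variable {R M : Type*} [CommRing R] [AddCommGroup M] [Module R M] {Q : QuadraticForm R M}

theorem contractLeft_mul_contractLeft (d d' : Module.Dual R M) :
    contractLeft (Q := Q) d * contractLeft d' = -(contractLeft d' * contractLeft d) :=
  LinearMap.ext fun x => contractLeft_comm d d' x

theorem contractLeft_mul_lmul_ι (d : Module.Dual R M) (v : M) :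
    contractLeft d * Algebra.lmul R _ (ι Q v) =
      -(Algebra.lmul R _ (ι Q v) * contractLeft d) + d v • 1 := by
  refine LinearMap.ext fun x => ?_
  simp [contractLeft_ι_mul, sub_eq_neg_add]

end CliffordAlgebra

theorem Fin.castAdd_ne_natAdd {m n : ℕ} (i : Fin m) (j : Fin n) :
    Fin.castAdd n i ≠ Fin.natAdd m j := by
  simp [Fin.ext_iff]; omega

theorem Module.End.commute_rTensorAlgHom_lTensorAlgHom {R M N : Type*} [CommSemiring R]
    [AddCommMonoid M] [Module R M] [AddCommMonoid N] [Module R N]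
    (f : Module.End R M) (g : Module.End R N) :
    Commute (rTensorAlgHom R M N f) (lTensorAlgHom R N M g) :=
  (LinearMap.rTensor_comp_lTensor M f g).trans (LinearMap.lTensor_comp_rTensor M f g).symm

theorem mul_mul_sub_mul_mul_of_superCommute {R A : Type*} [CommSemiring R] [Ring A]
    [Algebra R A] {x₁ d₁ x₂ d₂ : A} {s t δ ε : R} (hs : s * s = 1)
    (hxx : x₁ * x₂ = t • (x₂ * x₁)) (hdd : d₁ * d₂ = s • (d₂ * d₁))
    (hdx₁ : d₁ * x₂ = s • (x₂ * d₁) + δ • 1) (hdx₂ : d₂ * x₁ = t • (x₁ * d₂) + ε • 1) :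
    x₁ * d₁ * (x₂ * d₂) - x₂ * d₂ * (x₁ * d₁) = δ • (x₁ * d₂) - ε • (x₂ * d₁) := by
  have h₁ : x₁ * d₁ * (x₂ * d₂) = t • (x₂ * x₁ * (d₂ * d₁)) + δ • (x₁ * d₂) :=
    calc x₁ * d₁ * (x₂ * d₂) = x₁ * (d₁ * x₂) * d₂ := by simp only [mul_assoc]
      _ = s • (x₁ * x₂ * (d₁ * d₂)) + δ • (x₁ * d₂) := by
        rw [hdx₁]; simp only [mul_add, add_mul, mul_smul_comm, smul_mul_assoc, mul_one, mul_assoc]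
      _ = t • (x₂ * x₁ * (d₂ * d₁)) + δ • (x₁ * d₂) := by
        rw [hxx, hdd, smul_mul_smul_comm, smul_smul, mul_left_comm, hs, mul_one]
  have h₂ : x₂ * d₂ * (x₁ * d₁) = t • (x₂ * x₁ * (d₂ * d₁)) + ε • (x₂ * d₁) :=
    calc x₂ * d₂ * (x₁ * d₁) = x₂ * (d₂ * x₁) * d₁ := by simp only [mul_assoc]
      _ = _ := by
        rw [hdx₂]; simp only [mul_add, add_mul, mul_smul_comm, smul_mul_assoc, mul_one, mul_assoc]
  rw [h₁, h₂, add_sub_add_left_eq_sub]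

theorem commute_sum_mul_sum_mul {R A ι κ : Type*} [CommSemiring R] [Ring A] [Algebra R A]
    [Fintype ι] [Fintype κ] [DecidableEq ι] [DecidableEq κ] {x d : ι → κ → A} {i j : ι}
    {a b : κ} (h : ∀ c p, x i c * d j c * (x p a * d p b) - x p a * d p b * (x i c * d j c) =
      (if p = j ∧ a = c then 1 else 0 : R) • (x i c * d p b) -
        (if i = p ∧ c = b then 1 else 0 : R) • (x p a * d j c)) :
    Commute (∑ c, x i c * d j c) (∑ p, x p a * d p b) := by
  refine sub_eq_zero.mp ?_
  rw [Finset.sum_mul_sum, Finset.sum_mul_sum, Finset.sum_comm (s := Finset.univ (α := ι))]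
  simp only [← Finset.sum_sub_distrib, h]
  simp [Finset.sum_sub_distrib, ite_smul, ite_and]

section Operators

variable {m n k : ℕ}

open Module.End

local notation "𝒫" => MvPolynomial (Fin m × Fin k) ℂ
local notation "𝓔" => ExteriorAlgebra ℂ (Fin n × Fin k → ℂ)

theorem xOp_castAdd (i : Fin m) (a : Fin k) :
    xOp m n k (Fin.castAdd n i) a = rTensorAlgHom ℂ 𝒫 𝓔 (Algebra.lmul ℂ 𝒫 (X (i, a))) := by
  simp only [xOp, Fin.val_castAdd, Fin.is_lt, ↓reduceDIte, Fin.eta]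
  rfl

theorem xOp_natAdd (i : Fin n) (a : Fin k) :
    xOp m n k (Fin.natAdd m i) a =
      lTensorAlgHom ℂ 𝓔 𝒫 (Algebra.lmul ℂ 𝓔 (ExteriorAlgebra.ι ℂ (Pi.single (i, a) 1))) := by
  simp only [xOp, Fin.val_natAdd, add_lt_iff_neg_left, not_lt_zero, ↓reduceDIte,
    add_tsub_cancel_left, Fin.eta]
  rfl

theorem dOp_castAdd (i : Fin m) (a : Fin k) :
    dOp m n k (Fin.castAdd n i) a = rTensorAlgHom ℂ 𝒫 𝓔 (pderiv (i, a)).toLinearMap := by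
  simp only [dOp, Fin.val_castAdd, Fin.is_lt, ↓reduceDIte, Fin.eta]
  rfl

theorem dOp_natAdd (i : Fin n) (a : Fin k) :
    dOp m n k (Fin.natAdd m i) a =
      lTensorAlgHom ℂ 𝓔 𝒫 (CliffordAlgebra.contractLeft (LinearMap.proj (i, a))) := by
  simp only [dOp, Fin.val_natAdd, add_lt_iff_neg_left, not_lt_zero, ↓reduceDIte,
    add_tsub_cancel_left, Fin.eta]
  rfl

/-- `(-1)^{|i||p|}`, where the indices `≥ m` (the fermionic ones) are odd. -/
def superSign (m n : ℕ) (i p : Fin (m + n)) : ℂ :=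
  if m ≤ (i : ℕ) ∧ m ≤ (p : ℕ) then -1 else 1

@[simp]
theorem superSign_castAdd_left (i : Fin m) (p : Fin (m + n)) :
    superSign m n (Fin.castAdd n i) p = 1 := by
  simp [superSign, i.isLt]

@[simp]
theorem superSign_castAdd_right (i : Fin (m + n)) (p : Fin m) :
    superSign m n i (Fin.castAdd n p) = 1 := by
  simp [superSign, p.isLt]

@[simp]
theorem superSign_natAdd_natAdd (i p : Fin n) :
    superSign m n (Fin.natAdd m i) (Fin.natAdd m p) = -1 := by
  simp [superSign]

theorem superSign_comm (i p : Fin (m + n)) : superSign m n i p = superSign m n p i := by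
  simp only [superSign, and_comm]

theorem superSign_mul_self (i p : Fin (m + n)) : superSign m n i p * superSign m n i p = 1 := by
  unfold superSign; split_ifs <;> norm_num

theorem xOp_mul_xOp (i p : Fin (m + n)) (c a : Fin k) :
    xOp m n k i c * xOp m n k p a = superSign m n i p • (xOp m n k p a * xOp m n k i c) := by
  cases i using Fin.addCases <;> cases p using Fin.addCases <;>
    simp only [xOp_castAdd, xOp_natAdd, superSign_castAdd_left, superSign_castAdd_right,
      superSign_natAdd_natAdd, one_smul]
  · rw [← map_mul, ← map_mul, ← map_mul, ← map_mul, mul_comm (X _)]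
  · exact commute_rTensorAlgHom_lTensorAlgHom _ _
  · exact (commute_rTensorAlgHom_lTensorAlgHom _ _).symm
  · rw [← map_mul (lTensorAlgHom ℂ 𝓔 𝒫), ← map_mul (lTensorAlgHom ℂ 𝓔 𝒫), ← map_smul,
      ← map_mul (Algebra.lmul ℂ 𝓔), ← map_mul (Algebra.lmul ℂ 𝓔), ← map_smul,
      eq_neg_of_add_eq_zero_left (ExteriorAlgebra.ι_add_mul_swap _ _), neg_one_smul]

theorem dOp_mul_dOp (j q : Fin (m + n)) (c b : Fin k) :
    dOp m n k j c * dOp m n k q b = superSign m n j q • (dOp m n k q b * dOp m n k j c) := by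
  cases j using Fin.addCases <;> cases q using Fin.addCases <;>
    simp only [dOp_castAdd, dOp_natAdd, superSign_castAdd_left, superSign_castAdd_right,
      superSign_natAdd_natAdd, one_smul]
  · rw [← map_mul, ← map_mul, (commute_pderiv _ _).eq]
  · exact commute_rTensorAlgHom_lTensorAlgHom _ _
  · exact (commute_rTensorAlgHom_lTensorAlgHom _ _).symm
  · rw [← map_mul (lTensorAlgHom ℂ 𝓔 𝒫), ← map_mul (lTensorAlgHom ℂ 𝓔 𝒫), ← map_smul,
      CliffordAlgebra.contractLeft_mul_contractLeft]
    exact congrArg _ (neg_one_smul ℂ _).symm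

theorem dOp_mul_xOp (j p : Fin (m + n)) (c a : Fin k) :
    dOp m n k j c * xOp m n k p a = superSign m n j p • (xOp m n k p a * dOp m n k j c) +
      (if p = j ∧ a = c then 1 else 0 : ℂ) • 1 := by
  cases j using Fin.addCases <;> cases p using Fin.addCases <;>
    simp only [xOp_castAdd, xOp_natAdd, dOp_castAdd, dOp_natAdd, superSign_castAdd_left,
      superSign_castAdd_right, superSign_natAdd_natAdd, one_smul, Fin.castAdd_inj,
      Fin.natAdd_inj, Fin.castAdd_ne_natAdd, (Fin.castAdd_ne_natAdd _ _).symm, false_and,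
      if_false, zero_smul, add_zero]
  · rw [← map_mul, ← map_mul, pderiv_mul_lmul_X, map_add, map_smul, map_one]
    simp only [Prod.mk.injEq]
  · exact commute_rTensorAlgHom_lTensorAlgHom _ _
  · exact (commute_rTensorAlgHom_lTensorAlgHom _ _).symm
  · rw [← map_mul (lTensorAlgHom ℂ 𝓔 𝒫), ← map_mul (lTensorAlgHom ℂ 𝓔 𝒫), ← map_smul,
      CliffordAlgebra.contractLeft_mul_lmul_ι, map_add, map_smul (lTensorAlgHom ℂ 𝓔 𝒫) _ 1,
      map_one, LinearMap.proj_apply, Pi.single_comm, Pi.single_apply]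
    simp only [Prod.mk.injEq]
    exact congrArg (· + _) (congrArg _ (neg_one_smul ℂ _).symm)

theorem xOp_mul_dOp_commutator (i j p : Fin (m + n)) (c d a b : Fin k) :
    xOp m n k i c * dOp m n k j d * (xOp m n k p a * dOp m n k p b) -
        xOp m n k p a * dOp m n k p b * (xOp m n k i c * dOp m n k j d) =
      (if p = j ∧ a = d then 1 else 0 : ℂ) • (xOp m n k i c * dOp m n k p b) -
        (if i = p ∧ c = b then 1 else 0 : ℂ) • (xOp m n k p a * dOp m n k j d) := by
  have hdx := dOp_mul_xOp p i b c
  rw [superSign_comm] at hdx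
  exact mul_mul_sub_mul_mul_of_superCommute (A := Module.End ℂ (BF m n k))
    (superSign_mul_self j p) (xOp_mul_xOp i p c a) (dOp_mul_dOp j p d b) (dOp_mul_xOp j p d a) hdx

end Operators

theorem statement7_general (m n k : ℕ) (i j : Fin (m + n)) (a b : Fin k) :
    (∑ c : Fin k, xOp m n k i c * dOp m n k j c) *
        (∑ p : Fin (m + n), xOp m n k p a * dOp m n k p b) =
      (∑ p : Fin (m + n), xOp m n k p a * dOp m n k p b) *
        (∑ c : Fin k, xOp m n k i c * dOp m n k j c) :=
  commute_sum_mul_sum_mul (A := Module.End ℂ (BF m n k))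
    fun c p => xOp_mul_dOp_commutator i j p c c a b

/-- **Statement 7.**  The operators `E_{i,j} = Σ_c x_{i,c} ∂_{j,c}` and
`F_{a,b} = Σ_p x_{p,a} ∂_{p,b}` on the bosonic-fermionic space `V` commute. -/
theorem statement7 (m n k : ℕ) (hk : 1 ≤ k) (i j : Fin (m + n)) (a b : Fin k) :
    (∑ c : Fin k, xOp m n k i c * dOp m n k j c) *
        (∑ p : Fin (m + n), xOp m n k p a * dOp m n k p b) =
      (∑ p : Fin (m + n), xOp m n k p a * dOp m n k p b) *
        (∑ c : Fin k, xOp m n k i c * dOp m n k j c) :=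
  statement7_general m n k i j a b
end
end

section
/- Let A(w) be an affine Manin matrix of parity s over a superalgebra 𝒜. Then A(w) has a two-sided inverse A(w)^{−1} with entries in 𝒜[[w]], and A(w)^{−1} is again an affine Manin matrix of parity s. -/
noncomputable section
open scoped Classical

/-- A superalgebra structure on an associative unital `ℂ`-algebra `A`:
a `ℤ/2`-grading `A = A₀ ⊕ A₁` compatible with the multiplication. -/
structure SuperAlg (A : Type*) [Ring A] [Algebra ℂ A] where
  /-- The homogeneous components. -/
  g : ZMod 2 → Submodule ℂ A
  one_mem : (1 : A) ∈ g 0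
  mul_mem : ∀ {d e : ZMod 2} {a b : A}, a ∈ g d → b ∈ g e → a * b ∈ g (d + e)
  decomp : ∀ a : A, ∃ a0 ∈ g 0, ∃ a1 ∈ g 1, a = a0 + a1
  disjoint : ∀ a : A, a ∈ g 0 → a ∈ g 1 → a = 0

/-- `(−1)^d` for `d : ℤ/2`. -/
def sgnZ (d : ZMod 2) : ℤ := if d = 0 then 1 else -1

/-- A parity sequence: each `s i ∈ {1,−1}`. -/
def IsParitySeq {N : ℕ} (s : Fin N → ℤ) : Prop := ∀ i, s i = 1 ∨ s i = -1

/-- The `ℤ/2`-degree `ī^s` attached to a parity sequence. -/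
def pdeg {N : ℕ} (s : Fin N → ℤ) (i : Fin N) : ZMod 2 := if s i = 1 then 0 else 1

/-- The supercommutator `[x,y] = xy − (−1)^{x̄·ȳ} yx` of elements of (declared) degrees
`dx`, `dy`. -/
def scomm {B : Type*} [Ring B] (dx dy : ZMod 2) (x y : B) : B :=
  x * y - sgnZ (dx * dy) • (y * x)

/-- A matrix is of parity `s` if its `(i,j)` entry is homogeneous of degree `ī^s + j̄^s`
(with respect to the grading `g`). -/
def IsMatParity {B : Type*} [Ring B] [Algebra ℂ B] (g : ZMod 2 → Submodule ℂ B) {N : ℕ}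
    (s : Fin N → ℤ) (M : Matrix (Fin N) (Fin N) B) : Prop :=
  ∀ i j, M i j ∈ g (pdeg s i + pdeg s j)

/-- A Manin matrix of parity `s`: a matrix of parity `s` whose entries satisfy
`[a_{i,j},a_{p,q}] = (−1)^{ī^s j̄^s + ī^s p̄^s + j̄^s p̄^s} [a_{p,j},a_{i,q}]`. -/
def IsManin {B : Type*} [Ring B] [Algebra ℂ B] (g : ZMod 2 → Submodule ℂ B) {N : ℕ}
    (s : Fin N → ℤ) (M : Matrix (Fin N) (Fin N) B) : Prop :=
  IsMatParity g s M ∧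
    ∀ i j p q, scomm (pdeg s i + pdeg s j) (pdeg s p + pdeg s q) (M i j) (M p q) =
      sgnZ (pdeg s i * pdeg s j + pdeg s i * pdeg s p + pdeg s j * pdeg s p) •
        scomm (pdeg s p + pdeg s j) (pdeg s i + pdeg s q) (M p j) (M i q)

/-- The grading on `𝒜[[w]]` induced by a grading on `𝒜` (the variable `w` is even):
a power series is homogeneous of degree `d` iff all its coefficients are. -/
def gPS {A : Type*} [Ring A] [Algebra ℂ A] (g : ZMod 2 → Submodule ℂ A) (d : ZMod 2) :
    Submodule ℂ (PowerSeries A) where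
  carrier := {f | ∀ t : ℕ, PowerSeries.coeff t f ∈ g d}
  add_mem' := by
    intro f h hf hh t
    rw [map_add]
    exact (g d).add_mem (hf t) (hh t)
  zero_mem' := by
    intro t
    rw [map_zero]
    exact (g d).zero_mem
  smul_mem' := by
    intro c f hf t
    have : PowerSeries.coeff t (c • f) = c • PowerSeries.coeff t f := rfl
    rw [this]
    exact (g d).smul_mem c (hf t)

/-- An affine matrix over `𝒜`: a matrix with entries in `𝒜[[w]]` whose constant term is the
identity matrix. -/
def IsAffine {A : Type*} [Ring A] {N : ℕ} (M : Matrix (Fin N) (Fin N) (PowerSeries A)) :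
    Prop :=
  ∀ i j, PowerSeries.coeff 0 (M i j) = if i = j then 1 else 0

/-- The leading principal `(i+1) × (i+1)` submatrix. -/
def leadSub {R : Type*} [Ring R] {N : ℕ} (M : Matrix (Fin N) (Fin N) R) (i : Fin N) :
    Matrix (Fin ((i : ℕ) + 1)) (Fin ((i : ℕ) + 1)) R :=
  M.submatrix (Fin.castLE i.isLt) (Fin.castLE i.isLt)

/-- The `(i+1)`-st principal quasi-minor `d_{i+1}(M)`: the two-sided inverse of the last
diagonal entry of the two-sided inverse of the leading principal `(i+1) × (i+1)` submatrix
(`Ring.inverse` is the genuine two-sided inverse whenever one exists, and junk `0` otherwise). -/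
def dQM {R : Type*} [Ring R] {N : ℕ} (M : Matrix (Fin N) (Fin N) R) (i : Fin N) : R :=
  Ring.inverse ((Ring.inverse (leadSub M i)) (Fin.last (i : ℕ)) (Fin.last (i : ℕ)))

/-- `x^e` for `e ∈ {1,−1}`: `x` itself for `e = 1` and the two-sided inverse for `e = −1`. -/
def pexp {R : Type*} [Ring R] (x : R) (e : ℤ) : R := if e = 1 then x else Ring.inverse x

/-- Ordered product `f 0 * f 1 * ⋯ * f (N-1)` in a possibly noncommutative ring. -/
def listProd {R : Type*} [Ring R] {N : ℕ} (f : Fin N → R) : R :=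
  ((List.finRange N).map f).prod

/-- The Berezinian of parity `s`: `Ber^s M = d_1(M)^{s_1} ⋯ d_N(M)^{s_N}`. -/
def berPar {R : Type*} [Ring R] {N : ℕ} (s : Fin N → ℤ) (M : Matrix (Fin N) (Fin N) R) : R :=
  listProd fun i => pexp (dQM M i) (s i)

/-!
Write `X₁ = X ⊗ 1` and `X₂ = P X₁ P` for the super permutation `P` of `V ⊗ V`. The Manin
relations for `X` say exactly that `(1 - P) X₁ X₂ (1 + P) = 0`, equivalently that `X₂ X₁` is block
upper triangular for the idempotent `e = (1 + P) / 2`. Since `M ≡ 1 mod w`, `M` has an inverse `B`,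
and `(X₂ X₁)⁻¹ = B₁ B₂` for `X = M`; the inverse of a block upper triangular matrix whose diagonal
part is invertible (here again `≡ 1 mod w`) is block upper triangular, which gives the Manin
relations for `B`. Homogeneity of `B` holds because the matrices of parity `s` form a subring of
`Mat(𝒜)`, and the inverse of a power series with constant term `1` and coefficients in a subring
has its coefficients in that subring.
-/

open PowerSeries Matrix

section PowerSeriesMatrix

variable {R : Type*} [Ring R] {ι : Type*} [Fintype ι] [DecidableEq ι]

def matrixPowerSeriesEquiv : Matrix ι ι (PowerSeries R) ≃+* PowerSeries (Matrix ι ι R) where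
  toFun M := mk fun t => M.map (coeff t)
  invFun F := Matrix.of fun i j => mk fun t => coeff t F i j
  left_inv M := by ext; simp
  right_inv F := by ext; simp
  map_mul' M N := by
    ext t i j
    simp only [coeff_mk, map_apply, mul_apply, coeff_mul, map_sum, Matrix.sum_apply]
    exact Finset.sum_comm
  map_add' M N := by ext; simp

@[simp]
theorem coeff_matrixPowerSeriesEquiv (M : Matrix ι ι (PowerSeries R)) (t : ℕ) :
    coeff t (matrixPowerSeriesEquiv M) = M.map (coeff t) :=
  coeff_mk t fun t => M.map (coeff t)

@[simp]
theorem coeff_matrixPowerSeriesEquiv_symm_apply (F : PowerSeries (Matrix ι ι R)) (t : ℕ)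
    (i j : ι) :
    coeff t (matrixPowerSeriesEquiv.symm F i j) = coeff t F i j :=
  coeff_mk t fun t => coeff t F i j

theorem constantCoeff_matrixPowerSeriesEquiv (M : Matrix ι ι (PowerSeries R)) :
    constantCoeff (matrixPowerSeriesEquiv M) = M.map constantCoeff := by
  ext i j
  rw [← coeff_zero_eq_constantCoeff_apply, coeff_matrixPowerSeriesEquiv, map_apply, map_apply,
    coeff_zero_eq_constantCoeff_apply]

theorem isUnit_of_map_constantCoeff_eq_one {M : Matrix ι ι (PowerSeries R)}
    (h : M.map constantCoeff = 1) : IsUnit M := by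
  have hunit : IsUnit (matrixPowerSeriesEquiv M) := by
    rw [isUnit_iff_constantCoeff, constantCoeff_matrixPowerSeriesEquiv, h]
    exact isUnit_one
  simpa using hunit.map matrixPowerSeriesEquiv.symm

end PowerSeriesMatrix

theorem PowerSeries.exists_mul_eq_one_of_coeff_mem {R : Type*} [Ring R] (S : Subring R)
    {F : PowerSeries R} (hF : ∀ t, coeff t F ∈ S) (h0 : constantCoeff F = 1) :
    ∃ G : PowerSeries R, F * G = 1 ∧ G * F = 1 ∧ ∀ t, coeff t G ∈ S := by
  set F' : PowerSeries S := mk fun t => ⟨coeff t F, hF t⟩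
  have hF' : map S.subtype F' = F := by ext t; simp [F']
  have hunit : IsUnit F' := by
    rw [isUnit_iff_constantCoeff]
    convert isUnit_one
    ext
    simp [F', ← coeff_zero_eq_constantCoeff_apply, h0]
  obtain ⟨u, hu⟩ := hunit
  refine ⟨map S.subtype ↑u⁻¹, ?_, ?_, fun t => by simp⟩
  · rw [← hF', ← hu, ← map_mul, u.mul_inv, map_one]
  · rw [← hF', ← hu, ← map_mul, u.inv_mul, map_one]

section Parity

variable {A : Type*} [Ring A] {N : ℕ}

theorem isAffine_iff_map_constantCoeff {M : Matrix (Fin N) (Fin N) (PowerSeries A)} :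
    IsAffine M ↔ M.map constantCoeff = 1 := by
  simp only [IsAffine, ← Matrix.ext_iff, map_apply, one_apply, coeff_zero_eq_constantCoeff_apply]

variable [Algebra ℂ A]

def parityMatrices (S : SuperAlg A) (s : Fin N → ℤ) : Subring (Matrix (Fin N) (Fin N) A) where
  carrier := {X | IsMatParity S.g s X}
  mul_mem' {X Y} hX hY i j := by
    rw [mul_apply]
    refine Submodule.sum_mem _ fun k _ => ?_
    have h := S.mul_mem (hX i k) (hY k j)
    rwa [add_assoc, ← add_assoc (pdeg s k), CharTwo.add_self_eq_zero, zero_add] at h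
  one_mem' i j := by
    by_cases hij : i = j
    · subst hij
      simpa [CharTwo.add_self_eq_zero] using S.one_mem
    · simp [hij]
  add_mem' hX hY i j := Submodule.add_mem _ (hX i j) (hY i j)
  zero_mem' i j := Submodule.zero_mem _
  neg_mem' hX i j := Submodule.neg_mem _ (hX i j)

theorem exists_inverse_isAffine_isMatParity (S : SuperAlg A) (s : Fin N → ℤ)
    {M : Matrix (Fin N) (Fin N) (PowerSeries A)} (haff : IsAffine M)
    (hM : IsMatParity (gPS S.g) s M) :
    ∃ B, M * B = 1 ∧ B * M = 1 ∧ IsAffine B ∧ IsMatParity (gPS S.g) s B := by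
  have hM0 : constantCoeff (matrixPowerSeriesEquiv M) = 1 := by
    rw [constantCoeff_matrixPowerSeriesEquiv, ← isAffine_iff_map_constantCoeff]
    exact haff
  obtain ⟨G, hMG, hGM, hG⟩ := exists_mul_eq_one_of_coeff_mem (parityMatrices S s)
    (fun t i j => by simpa using hM i j t) hM0
  set B := matrixPowerSeriesEquiv.symm G
  have hMB : M * B = 1 := matrixPowerSeriesEquiv.injective (by simp [B, hMG])
  refine ⟨B, hMB, matrixPowerSeriesEquiv.injective (by simp [B, hGM]), ?_, fun i j t => ?_⟩
  · have h := congrArg (RingHom.mapMatrix (constantCoeff (R := A))) hMB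
    simp only [map_mul, map_one, RingHom.mapMatrix_apply,
      isAffine_iff_map_constantCoeff.mp haff, one_mul] at h
    exact isAffine_iff_map_constantCoeff.mpr h
  · simpa [B] using hG t i j

end Parity

theorem sgnZ_add (x y : ZMod 2) : sgnZ (x + y) = sgnZ x * sgnZ y := by
  revert x y; decide

theorem sgnZ_mul_self (x : ZMod 2) : sgnZ x * sgnZ x = 1 := by
  revert x; decide

section SuperTensor

variable (R : Type*) [Ring R] {ι : Type*} [DecidableEq ι] (d : ι → ZMod 2)

def superSwap : Matrix (ι × ι) (ι × ι) R :=
  Matrix.of fun x y => if y = x.swap then (sgnZ (d x.1 * d x.2) : R) else 0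

variable {R}

theorem map_superSwap {R' : Type*} [Ring R'] (f : R →+* R') :
    (superSwap R d).map f = superSwap R' d := by
  ext x y
  simp [superSwap, apply_ite f]

variable [Fintype ι]

theorem superSwap_mul_apply (Z : Matrix (ι × ι) (ι × ι) R) (x y : ι × ι) :
    (superSwap R d * Z) x y = sgnZ (d x.1 * d x.2) * Z x.swap y := by
  simp [superSwap, mul_apply, ite_mul]

theorem mul_superSwap_apply (Z : Matrix (ι × ι) (ι × ι) R) (x y : ι × ι) :
    (Z * superSwap R d) x y = Z x y.swap * sgnZ (d y.1 * d y.2) := by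
  have hswap (z : ι × ι) : y = z.swap ↔ z = y.swap := by rw [eq_comm, Prod.swap_eq_iff_eq_swap]
  simp [superSwap, mul_apply, mul_ite, hswap, mul_comm (d y.1)]

theorem superSwap_mul_self : superSwap R d * superSwap R d = 1 := by
  ext x y
  rw [superSwap_mul_apply]
  by_cases hxy : y = x
  · subst hxy
    simp [superSwap, mul_comm (d y.2), ← Int.cast_mul, sgnZ_mul_self]
  · simp [superSwap, hxy, one_apply_ne' hxy]

def tensorOne : Matrix ι ι R →+* Matrix (ι × ι) (ι × ι) R :=
  (blockDiagonalRingHom ι ι R).comp (Pi.constRingHom ι _)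

theorem tensorOne_apply (X : Matrix ι ι R) (i k j l : ι) :
    tensorOne X (i, k) (j, l) = if k = l then X i j else 0 :=
  blockDiagonal_apply' _ _ _ _ _

theorem map_tensorOne {R' : Type*} [Ring R'] (f : R →+* R') (X : Matrix ι ι R) :
    (tensorOne X).map f = tensorOne (X.map f) :=
  blockDiagonal_map _ f f.map_zero

end SuperTensor

section Manin

variable {R : Type*} [Ring R] {ι : Type*} [Fintype ι] [DecidableEq ι] (d : ι → ZMod 2)

def IsManinRel (X : Matrix ι ι R) : Prop :=
  ∀ i j p q, scomm (d i + d j) (d p + d q) (X i j) (X p q) =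
    sgnZ (d i * d j + d i * d p + d j * d p) • scomm (d p + d j) (d i + d q) (X p j) (X i q)

/-- `X₁ X₂` in `End (V ⊗ V)`, where `X₁ = X ⊗ 1` and `X₂ = P X₁ P` is `1 ⊗ X` with super signs. -/
def tensorSquare (X : Matrix ι ι R) : Matrix (ι × ι) (ι × ι) R :=
  tensorOne X * superSwap R d * tensorOne X * superSwap R d

theorem tensorSquare_apply (X : Matrix ι ι R) (i p j q : ι) :
    tensorSquare d X (i, p) (j, q) = sgnZ ((d p + d q) * d j) * (X i j * X p q) := by
  rw [tensorSquare, mul_superSwap_apply, mul_apply, Fintype.sum_prod_type]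
  simp only [tensorOne_apply, mul_superSwap_apply, Prod.swap_prod_mk, mul_ite, mul_zero,
    ite_mul, zero_mul, Finset.sum_ite_eq, Finset.sum_ite_eq', Finset.mem_univ, if_true]
  rw [add_mul, sgnZ_add, mul_comm (d j) (d q), mul_assoc (X i j), Int.cast_comm _ (X p q),
    ← mul_assoc, mul_assoc, ← Int.cast_mul, Int.cast_comm]

theorem one_sub_superSwap_mul_mul_one_add_superSwap_apply (Z : Matrix (ι × ι) (ι × ι) R)
    (i p j q : ι) :
    ((1 - superSwap R d) * Z * (1 + superSwap R d)) (i, p) (j, q) =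
      (Z (i, p) (j, q) - sgnZ (d i * d p) * Z (p, i) (j, q)) +
        (Z (i, p) (q, j) - sgnZ (d i * d p) * Z (p, i) (q, j)) * sgnZ (d j * d q) := by
  rw [sub_mul, one_mul, mul_add, mul_one, Matrix.add_apply, mul_superSwap_apply,
    Matrix.sub_apply, Matrix.sub_apply, superSwap_mul_apply, superSwap_mul_apply]
  rfl

theorem manin_sandwich_apply (X : Matrix ι ι R) (i p j q : ι) :
    ((1 - superSwap R d) * tensorSquare d X * (1 + superSwap R d)) (i, p) (j, q) =
      sgnZ ((d p + d q) * d j) * (scomm (d i + d j) (d p + d q) (X i j) (X p q) -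
        sgnZ (d i * d j + d i * d p + d j * d p) •
          scomm (d p + d j) (d i + d q) (X p j) (X i q)) := by
  rw [one_sub_superSwap_mul_mul_one_add_superSwap_apply]
  simp only [tensorSquare_apply]
  generalize X i j = x, X p q = y, X p j = z, X i q = w
  generalize d i = a, d p = b, d j = c, d q = e
  have hZ : ∀ v : ZMod 2, v = 0 ∨ v = 1 := by decide
  rcases hZ a with rfl | rfl <;> rcases hZ b with rfl | rfl <;>
    rcases hZ c with rfl | rfl <;> rcases hZ e with rfl | rfl <;>
    simp +decide [scomm, sgnZ, sub_eq_add_neg] <;> abel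

theorem isManinRel_iff (X : Matrix ι ι R) :
    IsManinRel d X ↔ (1 - superSwap R d) * tensorSquare d X * (1 + superSwap R d) = 0 := by
  have hsgn (x : ZMod 2) : IsUnit (sgnZ x : R) := by
    have h : (sgnZ x : R) * sgnZ x = 1 := by rw [← Int.cast_mul, sgnZ_mul_self, Int.cast_one]
    exact ⟨⟨_, _, h, h⟩, rfl⟩
  simp only [← Matrix.ext_iff, Prod.forall, manin_sandwich_apply, Matrix.zero_apply,
    (hsgn _).mul_right_eq_zero, sub_eq_zero, IsManinRel]
  exact ⟨fun h i p j q => h i j p q, fun h i j p q => h i p j q⟩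

end Manin

section Idempotent

variable {E : Type*} [Ring E]

theorem one_sub_mul_conj_mul_one_add {P : E} (hP : P * P = 1) (Z : E) :
    (1 - P) * (P * Z * P) * (1 + P) = -((1 - P) * Z * (1 + P)) := by
  have h1 : (1 - P) * P = -(1 - P) := by rw [sub_mul, one_mul, hP, neg_sub]
  have h2 : P * (1 + P) = 1 + P := by rw [mul_add, mul_one, hP, add_comm]
  calc (1 - P) * (P * Z * P) * (1 + P) = (1 - P) * P * Z * (P * (1 + P)) := by
        simp only [mul_assoc]
    _ = _ := by rw [h1, h2, neg_mul, neg_mul]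

theorem IsIdempotentElem.one_sub_mul_mul_eq_zero_of_mul_eq_one {e X Y : E}
    (he : IsIdempotentElem e) (hYX : Y * X = 1) (hX : (1 - e) * X * e = 0)
    (hu : IsUnit (e * X * e + (1 - e))) : (1 - e) * Y * e = 0 := by
  have hXe : e * X * e = X * e := by
    rwa [sub_mul, sub_mul, one_mul, sub_eq_zero, eq_comm] at hX
  have hef : e * (1 - e) = 0 := by rw [mul_sub, mul_one, he.eq, sub_self]
  have hfe : (1 - e) * e = 0 := by rw [sub_mul, one_mul, he.eq, sub_self]
  refine hu.mul_left_eq_zero.mp ?_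
  calc (1 - e) * Y * e * (e * X * e + (1 - e))
        = (1 - e) * Y * (e * e * X * e) + (1 - e) * Y * (e * (1 - e)) := by
          simp only [mul_add, mul_assoc]
    _ = (1 - e) * (Y * X) * e := by
          rw [he.eq, hXe, hef]
          simp only [mul_zero, add_zero, mul_assoc]
    _ = 0 := by rw [hYX, mul_one, hfe]

variable [Algebra ℂ E]

theorem isIdempotentElem_half_smul_one_add {P : E} (hP : P * P = 1) :
    IsIdempotentElem ((2⁻¹ : ℂ) • (1 + P)) := by
  have h : (1 + P) * (1 + P) = 1 + P + P + P * P := by noncomm_ring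
  rw [IsIdempotentElem, smul_mul_smul, h, hP]
  module

theorem one_sub_mul_mul_one_add_eq_zero_iff (P Z : E) :
    (1 - P) * Z * (1 + P) = 0 ↔
      (1 - (2⁻¹ : ℂ) • (1 + P)) * Z * ((2⁻¹ : ℂ) • (1 + P)) = 0 := by
  have h : 1 - (2⁻¹ : ℂ) • (1 + P) = (2⁻¹ : ℂ) • (1 - P) := by module
  rw [h, smul_mul_assoc, smul_mul_assoc, mul_smul_comm, smul_smul, smul_eq_zero,
    or_iff_right (by norm_num)]

end Idempotent

theorem IsManinRel.of_mul_eq_one {A : Type*} [Ring A] [Algebra ℂ A] {ι : Type*} [Fintype ι]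
    [DecidableEq ι] {d : ι → ZMod 2} {M B : Matrix ι ι (PowerSeries A)}
    (hM1 : M.map constantCoeff = 1) (hBM : B * M = 1) (hM : IsManinRel d M) :
    IsManinRel d B := by
  set P := superSwap (PowerSeries A) d
  set e : Matrix (ι × ι) (ι × ι) (PowerSeries A) := (2⁻¹ : ℂ) • (1 + P)
  have hP : P * P = 1 := superSwap_mul_self d
  have he : IsIdempotentElem e := isIdempotentElem_half_smul_one_add hP
  set X := P * tensorOne M * P * tensorOne M
  have hX : X = P * tensorSquare d M * P := by
    change X = P * (tensorOne M * P * tensorOne M * P) * P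
    simp only [X, mul_assoc, hP, mul_one]
  have hYX : tensorSquare d B * X = 1 := by
    change tensorOne B * P * tensorOne B * P * (P * tensorOne M * P * tensorOne M) = 1
    calc _ = tensorOne B * P * (tensorOne B * (P * P) * tensorOne M) * P * tensorOne M := by
          simp only [mul_assoc]
      _ = 1 := by
          rw [hP, mul_one, ← map_mul, hBM, map_one, mul_one, mul_assoc (tensorOne B), hP, mul_one,
            ← map_mul, hBM, map_one]
  have hu : IsUnit (e * X * e + (1 - e)) := by
    apply isUnit_of_map_constantCoeff_eq_one
    have hX1 : (RingHom.mapMatrix constantCoeff) X = 1 := by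
      simp only [X, P, map_mul, RingHom.mapMatrix_apply, map_superSwap, map_tensorOne, hM1,
        map_one, mul_one]
      exact superSwap_mul_self d
    rw [← RingHom.mapMatrix_apply, map_add, map_mul, map_mul, map_sub, map_one, hX1, mul_one,
      (he.map _).eq, add_sub_cancel]
  rw [isManinRel_iff, one_sub_mul_mul_one_add_eq_zero_iff]
  refine he.one_sub_mul_mul_eq_zero_of_mul_eq_one hYX ?_ hu
  rw [← one_sub_mul_mul_one_add_eq_zero_iff, hX, one_sub_mul_conj_mul_one_add hP,
    (isManinRel_iff d M).mp hM, neg_zero]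

theorem statement10_general (A : Type*) [Ring A] [Algebra ℂ A] (S : SuperAlg A) (m n : ℕ)
    (s : Fin (m + n) → ℤ)
    (M : Matrix (Fin (m + n)) (Fin (m + n)) (PowerSeries A))
    (haff : IsAffine M) (hM : IsManin (gPS S.g) s M) :
    ∃ B : Matrix (Fin (m + n)) (Fin (m + n)) (PowerSeries A),
      M * B = 1 ∧ B * M = 1 ∧ IsAffine B ∧ IsManin (gPS S.g) s B := by
  obtain ⟨B, hMB, hBM, hBaff, hBpar⟩ := exists_inverse_isAffine_isMatParity S s haff hM.1
  exact ⟨B, hMB, hBM, hBaff, hBpar,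
    IsManinRel.of_mul_eq_one (isAffine_iff_map_constantCoeff.mp haff) hBM hM.2⟩

/-- **Statement 10.**  An affine Manin matrix `A(w)` of parity `s` over a superalgebra `𝒜`
has a two-sided inverse with entries in `𝒜[[w]]`, which is again an affine Manin matrix of
parity `s`. -/
theorem statement10 (A : Type*) [Ring A] [Algebra ℂ A] (S : SuperAlg A) (m n : ℕ)
    (s : Fin (m + n) → ℤ) (hs : IsParitySeq s)
    (hm : (Finset.univ.filter fun i => s i = 1).card = m)
    (M : Matrix (Fin (m + n)) (Fin (m + n)) (PowerSeries A))
    (haff : IsAffine M) (hM : IsManin (gPS S.g) s M) :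
    ∃ B : Matrix (Fin (m + n)) (Fin (m + n)) (PowerSeries A),
      M * B = 1 ∧ B * M = 1 ∧ IsAffine B ∧ IsManin (gPS S.g) s B :=
  statement10_general A S m n s M haff hM
end
end
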